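/- arXiv:1210.2389 — 2 statements merged into one kernel-verified Lean document; each statement's English description precedes it below -/
import Mathlib

section
/- Let m ≥ 3 be an integer and define, for t > 0 and x ∈ ℝ^m with x ≠ 0, A_1(t,x) = (2/((m-1)σ_{m+1})) |x|^{2-m} F_{m-2}(|x|/t), where F_k(v) = ∫_0^v η^{k-1}(1+η²)^{-(k+1)/2} dη. Then on {(t,x) : t > 0, x ≠ 0}: ∂_t A_1(t,x) = A_0(t,x) and ∂_{x_j} A_1(t,x) = -B_{0,j}(t,x) for each j, where A_0(t,x) = -(2/((m-1)σ_{m+1})) (t²+|x|²)^{-(m-1)/2} and B_{0,j}(t,x) = (2/σ_{m+1}) (x_j/|x|^m) F_m(|x|/t). (This is the componentwise form of the relation D̄ A_1 = C_0: A_1 is a harmonic potential of the monogenic logarithmic function C_0 = ½A_0 + ½ē₀B_0 in upper half-space.) -/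
open MeasureTheory

/-- The area of the unit sphere `S^{n-1}` in `ℝ^n`: `σ_n = 2 π^{n/2} / Γ(n/2)`. -/
noncomputable def sphereArea (n : ℕ) : ℝ :=
  2 * Real.pi ^ ((n : ℝ) / 2) / Real.Gamma ((n : ℝ) / 2)

/-- `F_k(v) = ∫_0^v η^{k-1} (1+η²)^{-(k+1)/2} dη`. -/
noncomputable def Fpot (k : ℕ) (v : ℝ) : ℝ :=
  ∫ η in (0:ℝ)..v, η ^ (k - 1) / (1 + η ^ 2) ^ (((k : ℝ) + 1) / 2)

/-- The harmonic potential `A_0(t,x) = -(2/((m-1)σ_{m+1})) (t²+|x|²)^{-(m-1)/2}`. -/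
noncomputable def potA0 (m : ℕ) (t : ℝ) (x : EuclideanSpace ℝ (Fin m)) : ℝ :=
  -(2 / (((m : ℝ) - 1) * sphereArea (m + 1))) * (t ^ 2 + ‖x‖ ^ 2) ^ (-(((m : ℝ) - 1) / 2))

/-- The components `B_{0,j}(t,x) = (2/σ_{m+1}) (x_j/|x|^m) F_m(|x|/t)` of the conjugate
harmonic potential `B_0`. -/
noncomputable def potB0 (m : ℕ) (j : Fin m) (t : ℝ) (x : EuclideanSpace ℝ (Fin m)) : ℝ :=
  2 / sphereArea (m + 1) * (x j / ‖x‖ ^ m) * Fpot m (‖x‖ / t)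

/-- The upstream harmonic potential
`A_1(t,x) = (2/((m-1)σ_{m+1})) |x|^{2-m} F_{m-2}(|x|/t)`. -/
noncomputable def potA1 (m : ℕ) (t : ℝ) (x : EuclideanSpace ℝ (Fin m)) : ℝ :=
  2 / (((m : ℝ) - 1) * sphereArea (m + 1)) * ‖x‖ ^ (2 - (m : ℝ)) * Fpot (m - 2) (‖x‖ / t)

lemma fcont (k : ℕ) : Continuous fun η : ℝ => η ^ (k - 1) / (1 + η ^ 2) ^ (((k : ℝ) + 1) / 2) := by
  apply (continuous_pow _).div
  · exact (continuous_const.add (continuous_pow 2)).rpow_const fun x => Or.inl (by positivity : (1:ℝ) + x ^ 2 ≠ 0)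
  · intro x; positivity

lemma Fpot_hasDerivAt (k : ℕ) (v : ℝ) :
    HasDerivAt (Fpot k) (v ^ (k - 1) / (1 + v ^ 2) ^ (((k : ℝ) + 1) / 2)) v := by
  exact intervalIntegral.integral_hasDerivAt_right ((fcont k).intervalIntegrable 0 v)
    ((fcont k).stronglyMeasurable.stronglyMeasurableAtFilter) (fcont k).continuousAt

lemma Fpot_sub2 (m : ℕ) (hm : 3 ≤ m) (v : ℝ) :
    Fpot (m-2) v = ∫ η in (0:ℝ)..v, η ^ (m-3) / (1 + η ^ 2) ^ (((m:ℝ)-1) / 2) := by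
  unfold Fpot
  congr 1
  ext η
  have h1 : m - 2 - 1 = m - 3 := by omega
  have h2 : ((m - 2 : ℕ) : ℝ) + 1 = (m:ℝ) - 1 := by
    have : ((m - 2 : ℕ) : ℝ) = (m:ℝ) - 2 := by
      push_cast [Nat.cast_sub (by omega : 2 ≤ m)]; ring
    rw [this]; ring
  rw [h1, h2]

lemma ibp (m : ℕ) (hm : 3 ≤ m) (v : ℝ) :
    v ^ (m-2) * (1+v^2) ^ (-(((m:ℝ)-1)/2)) =
      ((m:ℝ)-2) * Fpot (m-2) v - ((m:ℝ)-1) * Fpot m v := by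
  set p : ℝ := ((m:ℝ)-1)/2 with hp
  have hcast : ((m - 2 : ℕ) : ℝ) = (m:ℝ) - 2 := by
    push_cast [Nat.cast_sub (by omega : 2 ≤ m)]; ring
  have f1cont : Continuous fun η : ℝ => η ^ (m-3) / (1 + η ^ 2) ^ p := by
    apply (continuous_pow _).div
    · exact (continuous_const.add (continuous_pow 2)).rpow_const fun x => Or.inl (by positivity : (1:ℝ) + x ^ 2 ≠ 0)
    · intro x; positivity
  have f2cont : Continuous fun η : ℝ => η ^ (m-1) / (1 + η ^ 2) ^ (((m:ℝ)+1)/2) := fcont m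
  have hG : ∀ η : ℝ, HasDerivAt (fun η : ℝ => η ^ (m-2) * (1+η^2) ^ (-p))
      (((m:ℝ)-2) * (η ^ (m-3) / (1 + η ^ 2) ^ p)
        - ((m:ℝ)-1) * (η ^ (m-1) / (1 + η ^ 2) ^ (((m:ℝ)+1)/2))) η := by
    intro η
    have hbase : (0:ℝ) < 1 + η^2 := by positivity
    have hin : HasDerivAt (fun η : ℝ => 1 + η^2) (2*η) η := by
      simpa using (hasDerivAt_pow 2 η).const_add 1
    have hr : HasDerivAt (fun η : ℝ => (1+η^2) ^ (-p))
        ((-p) * (1+η^2) ^ (-p-1) * (2*η)) η := by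
      have := (Real.hasDerivAt_rpow_const (x := 1+η^2) (p := -p) (Or.inl hbase.ne')).comp η hin
      simpa [Function.comp_def, mul_comm, mul_assoc] using this
    have := (hasDerivAt_pow (m-2) η).mul hr
    refine this.congr_deriv ?_; symm
    have e1 : m - 2 - 1 = m - 3 := by omega
    have e2 : (-p) - 1 = -(((m:ℝ)+1)/2) := by rw [hp]; ring
    have e3 : η ^ (m-2) * η = η ^ (m-1) := by
      rw [← pow_succ]; congr 1; omega
    rw [e1, e2, hcast, Real.rpow_neg hbase.le, Real.rpow_neg hbase.le, div_eq_mul_inv,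
      div_eq_mul_inv]
    ring_nf
    rw [← e3]
    ring
  have hint : IntervalIntegrable (fun η : ℝ =>
      ((m:ℝ)-2) * (η ^ (m-3) / (1 + η ^ 2) ^ p)
        - ((m:ℝ)-1) * (η ^ (m-1) / (1 + η ^ 2) ^ (((m:ℝ)+1)/2))) volume 0 v :=
    ((continuous_const.mul f1cont).sub (continuous_const.mul f2cont)).intervalIntegrable 0 v
  have key := intervalIntegral.integral_eq_sub_of_hasDerivAt (fun η _ => hG η) hint
  have hz : (0:ℝ) ^ (m-2) * ((1:ℝ)+0^2) ^ (-p) = 0 := by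
    rw [zero_pow (by omega : m - 2 ≠ 0)]; ring
  rw [intervalIntegral.integral_sub
      (f := fun η : ℝ => ((m:ℝ)-2) * (η ^ (m-3) / (1 + η ^ 2) ^ p))
      (g := fun η : ℝ => ((m:ℝ)-1) * (η ^ (m-1) / (1 + η ^ 2) ^ (((m:ℝ)+1)/2)))
      ((continuous_const.mul f1cont).intervalIntegrable 0 v)
      ((continuous_const.mul f2cont).intervalIntegrable 0 v),
    intervalIntegral.integral_const_mul, intervalIntegral.integral_const_mul] at key
  rw [← Fpot_sub2 m hm v] at key
  have hFm : Fpot m v = ∫ η in (0:ℝ)..v, η ^ (m-1) / (1 + η ^ 2) ^ (((m:ℝ)+1)/2) := rfl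
  rw [← hFm] at key
  simp only [hz, sub_zero] at key
  linarith [key]

lemma algA (m : ℕ) (hm : 3 ≤ m) (t r : ℝ) (ht : 0 < t) (hr : 0 < r) :
    r ^ (2-(m:ℝ)) * ((r/t) ^ (m-3) / (1+(r/t)^2) ^ (((m:ℝ)-1)/2) * (r * -(t^2)⁻¹))
      = -((t^2+r^2) ^ (-(((m:ℝ)-1)/2))) := by
  have h1 : 1+(r/t)^2 = (t^2+r^2)/t^2 := by field_simp
  have hs : (0:ℝ) < t^2 + r^2 := by positivity
  rw [h1, Real.div_rpow hs.le (by positivity)]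
  have h2 : ((t^2:ℝ)) ^ (((m:ℝ)-1)/2) = t ^ ((m:ℝ)-1) := by
    rw [← Real.rpow_natCast t 2, ← Real.rpow_mul ht.le]
    congr 1; ring
  have h3 : (r/t)^(m-3) = r ^ ((m:ℝ)-3) / t ^ ((m:ℝ)-3) := by
    rw [div_pow, ← Real.rpow_natCast r (m-3), ← Real.rpow_natCast t (m-3),
      Nat.cast_sub (by omega)]
    norm_num
  rw [h2, h3, Real.rpow_neg hs.le]
  have hA : (0:ℝ) < (t^2+r^2) ^ (((m:ℝ)-1)/2) := Real.rpow_pos_of_pos hs _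
  have hrr : r ^ (2-(m:ℝ)) * r ^ ((m:ℝ)-3) * r = 1 := by
    rw [← Real.rpow_add hr]
    norm_num
    rw [Real.rpow_neg_one]
    field_simp
  have htt : t ^ ((m:ℝ)-1) = t ^ ((m:ℝ)-3) * t^2 := by
    rw [← Real.rpow_natCast t 2, ← Real.rpow_add ht]
    congr 1; push_cast; ring
  field_simp
  rw [htt]
  linear_combination (-(t ^ ((m:ℝ)-3) * t^2)) * hrr

lemma algB (m : ℕ) (hm : 3 ≤ m) (t r xj σ F1 Fm B : ℝ) (ht : 0 < t) (hr : 0 < r)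
    (hσ : 0 < σ) (hB : 0 < B)
    (hF : ((m:ℝ)-1) * Fm = ((m:ℝ)-2) * F1 - (r/t)^(m-2) * B⁻¹) :
    (2/(((m:ℝ)-1)*σ) * ((2-(m:ℝ)) * r ^ (2-(m:ℝ)-1)) * F1
      + 2/(((m:ℝ)-1)*σ) * r ^ (2-(m:ℝ)) * ((r/t) ^ (m-3) / B * (1/t))) * (xj / r)
      = -(2/σ * (xj / r^m) * Fm) := by
  have hm1 : ((m:ℝ)-1) ≠ 0 := by
    have : (3:ℝ) ≤ (m:ℝ) := by exact_mod_cast hm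
    linarith
  have e1 : r ^ (2-(m:ℝ)-1) * r ^ m = r := by
    rw [← Real.rpow_natCast r m, ← Real.rpow_add hr,
      show (2-(m:ℝ)-1+(m:ℕ)) = 1 by ring, Real.rpow_one]
  have e2 : r ^ (2-(m:ℝ)) * r ^ m = r * r := by
    rw [← Real.rpow_natCast r m, ← Real.rpow_add hr]
    rw [show (2-(m:ℝ)+(m:ℕ)) = 2 by ring]
    rw [show ((2:ℝ)) = ((2:ℕ):ℝ) by norm_num, Real.rpow_natCast]
    ring
  have e3 : (r/t) ^ (m-3) * (r/t) = (r/t) ^ (m-2) := by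
    rw [← pow_succ]; congr 1; omega
  field_simp
  have e4 : r^(m-3) * r = r^(m-2) := by rw [← pow_succ]; congr 1; omega
  have e5 : t^(m-3) * t = t^(m-2) := by rw [← pow_succ]; congr 1; omega
  have hB' : B⁻¹ * B = 1 := inv_mul_cancel₀ hB.ne'
  have e6 : (t⁻¹)^(m-2) * t^(m-2) = 1 := by
    rw [← mul_pow]; simp [ht.ne']
  have hF' : ((m:ℝ)-1)*Fm*B*t^(m-2) = ((m:ℝ)-2)*F1*B*t^(m-2) - r^(m-2) := by
    linear_combination (B*t^(m-2))*hF - (r^(m-2)*B⁻¹*B)*e6 - r^(m-2)*hB'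
  linear_combination
    ((2-(m:ℝ))*F1*t*B*xj) * e1
    + ((r/t)^(m-3)*xj) * e2
    + (r*t*B*xj) * hF
    + (-(r/t)^(m-2)*r*t*xj) * hB'
    + (r*t*xj) * e3
    + (-(r/t)^(m-3)*r^2*xj) * (inv_mul_cancel₀ ht.ne' : t⁻¹ * t = 1)

theorem A1_primitive_of_monogenic_logarithm
    (m : ℕ) (hm : 3 ≤ m) (t : ℝ) (ht : 0 < t) (x : EuclideanSpace ℝ (Fin m)) (hx : x ≠ 0) :
    deriv (fun s => potA1 m s x) t = potA0 m t x ∧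
    ∀ j : Fin m,
      deriv (fun s : ℝ => potA1 m t (x + s • EuclideanSpace.single j (1 : ℝ))) 0 =
        -potB0 m j t x := by
  have hr : (0:ℝ) < ‖x‖ := norm_pos_iff.mpr hx
  have hσ : (0:ℝ) < sphereArea (m+1) := by
    unfold sphereArea
    exact div_pos (by positivity) (Real.Gamma_pos_of_pos (by positivity))
  have hm1 : ((m:ℝ)-1) ≠ 0 := by
    have : (3:ℝ) ≤ (m:ℝ) := by exact_mod_cast hm
    linarith
  have hcastexp : (((m - 2 : ℕ) : ℝ) + 1) / 2 = ((m:ℝ)-1)/2 := by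
    have : ((m - 2 : ℕ) : ℝ) = (m:ℝ) - 2 := by
      push_cast [Nat.cast_sub (by omega : 2 ≤ m)]; ring
    rw [this]; ring
  have hsub : m - 2 - 1 = m - 3 := by omega
  set C : ℝ := 2 / (((m : ℝ) - 1) * sphereArea (m + 1)) with hC
  constructor
  · -- time derivative
    have hdiv : HasDerivAt (fun s : ℝ => ‖x‖ / s) (‖x‖ * -(t^2)⁻¹) t := by
      simpa [div_eq_mul_inv] using (hasDerivAt_inv ht.ne').const_mul ‖x‖
    have hcomp := ((Fpot_hasDerivAt (m-2) (‖x‖/t)).comp t hdiv).const_mul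
      (C * ‖x‖ ^ (2 - (m:ℝ)))
    simp only [Function.comp_def, hsub, hcastexp] at hcomp
    have hfun : (fun s => potA1 m s x)
        = fun s => C * ‖x‖ ^ (2 - (m:ℝ)) * Fpot (m-2) (‖x‖/s) := by
      funext s; rw [potA1, hC]
    have hcomp' : HasDerivAt (fun s => C * ‖x‖ ^ (2 - (m:ℝ)) * Fpot (m-2) (‖x‖/s))
        (C * ‖x‖ ^ (2 - (m:ℝ)) *
          ((‖x‖/t) ^ (m-3) / (1+(‖x‖/t)^2) ^ (((m:ℝ)-1)/2) * (‖x‖ * -(t^2)⁻¹))) t := by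
      convert hcomp using 2
    rw [hfun, hcomp'.deriv, potA0, ← hC]
    linear_combination C * (algA m hm t ‖x‖ ht hr)
  · -- spatial derivatives
    intro j
    have hn : ∀ s : ℝ, ‖x + s • EuclideanSpace.single j (1:ℝ)‖
        = Real.sqrt (‖x‖^2 + 2*s*(x j) + s^2) := by
      intro s
      rw [← Real.sqrt_sq (norm_nonneg (x + s • EuclideanSpace.single j (1:ℝ)))]
      congr 1
      rw [norm_add_sq_real, real_inner_smul_right, norm_smul, EuclideanSpace.norm_single]
      rw [EuclideanSpace.inner_single_right]
      simp [mul_pow]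
      ring
    have hq : HasDerivAt (fun s : ℝ => ‖x‖^2 + 2*s*(x j) + s^2) (2 * x j) 0 := by
      have h1 : HasDerivAt (fun s : ℝ => 2*s*(x j)) (2 * x j) 0 := by
        simpa using ((hasDerivAt_id (0:ℝ)).const_mul 2).mul_const (x j)
      have h2 : HasDerivAt (fun s : ℝ => s^2) 0 0 := by
        simpa using hasDerivAt_pow 2 (0:ℝ)
      exact (((hasDerivAt_const (0:ℝ) (‖x‖^2)).add h1).add h2).congr_deriv (by ring)
    have hq0 : ‖x‖^2 + 2*(0:ℝ)*(x j) + (0:ℝ)^2 = ‖x‖^2 := by ring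
    have hN : HasDerivAt (fun s : ℝ => ‖x + s • EuclideanSpace.single j (1:ℝ)‖)
        (x j / ‖x‖) 0 := by
      have hs := Real.hasDerivAt_sqrt (x := ‖x‖^2 + 2*(0:ℝ)*(x j) + (0:ℝ)^2)
        (by rw [hq0]; positivity)
      have := hs.comp 0 hq
      have heq : (fun s : ℝ => Real.sqrt (‖x‖^2 + 2*s*(x j) + s^2))
          = fun s : ℝ => ‖x + s • EuclideanSpace.single j (1:ℝ)‖ := by
        funext s; rw [hn s]
      rw [Function.comp_def, heq] at this
      refine this.congr_deriv ?_; symm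
      rw [hq0, Real.sqrt_sq (norm_nonneg x)]
      field_simp
    -- derivative of the radial profile
    have h1 : HasDerivAt (fun r : ℝ => C * r ^ (2-(m:ℝ)))
        (C * ((2-(m:ℝ)) * ‖x‖ ^ (2-(m:ℝ)-1))) ‖x‖ :=
      (Real.hasDerivAt_rpow_const (Or.inl hr.ne')).const_mul C
    have hdt : HasDerivAt (fun r : ℝ => r / t) (1/t) ‖x‖ := (hasDerivAt_id _).div_const t
    have h2 := (Fpot_hasDerivAt (m-2) (‖x‖/t)).comp ‖x‖ hdt
    rw [Function.comp_def] at h2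
    have hg := h1.mul h2
    have h0 : ‖x + (0:ℝ) • EuclideanSpace.single j (1:ℝ)‖ = ‖x‖ := by simp
    rw [← h0] at hg
    have hcomp := hg.comp 0 hN
    rw [Function.comp_def] at hcomp
    rw [h0] at hcomp
    simp only [hsub, hcastexp] at hcomp
    have hfun : (fun s : ℝ => potA1 m t (x + s • EuclideanSpace.single j (1 : ℝ)))
        = fun s : ℝ => C * ‖x + s • EuclideanSpace.single j (1:ℝ)‖ ^ (2-(m:ℝ))
            * Fpot (m-2) (‖x + s • EuclideanSpace.single j (1:ℝ)‖ / t) := by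
      funext s; rw [potA1, hC]
    rw [hfun]; erw [hcomp.deriv]
    -- now the algebra
    have hB : (0:ℝ) < (1+(‖x‖/t)^2) ^ (((m:ℝ)-1)/2) := Real.rpow_pos_of_pos (by positivity) _
    have hF : ((m:ℝ)-1) * Fpot m (‖x‖/t) = ((m:ℝ)-2) * Fpot (m-2) (‖x‖/t)
        - (‖x‖/t)^(m-2) * ((1+(‖x‖/t)^2) ^ (((m:ℝ)-1)/2))⁻¹ := by
      have h := ibp m hm (‖x‖/t)
      rw [Real.rpow_neg (by positivity)] at h
      linarith
    have halg := algB m hm t ‖x‖ (x j) (sphereArea (m+1)) (Fpot (m-2) (‖x‖/t))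
      (Fpot m (‖x‖/t)) ((1+(‖x‖/t)^2) ^ (((m:ℝ)-1)/2)) ht hr hσ hB hF
    rw [← hC] at halg
    rw [potB0]
    convert halg using 2
end

section
/- Let m ≥ 2 be an integer and define, for t > 0 and x ∈ ℝ^m with x ≠ 0, B_{1,j}(t,x) = (2/σ_{m+1}) (t x_j/|x|^m) F_m(|x|/t) - (2/((m-1)σ_{m+1})) x_j (t²+|x|²)^{-(m-1)/2}, where F_m(v) = ∫_0^v η^{m-1}(1+η²)^{-(m+1)/2} dη. Then on {(t,x) : t > 0, x ≠ 0}: (a) ∂_t B_{1,j}(t,x) = B_{0,j}(t,x) for each j; (b) Σ_{j=1}^m ∂_{x_j} B_{1,j}(t,x) = A_0(t,x); (c) ∂_{x_i} B_{1,j} = ∂_{x_j} B_{1,i} for all i, j; where B_{0,j}(t,x) = (2/σ_{m+1}) (x_j/|x|^m) F_m(|x|/t) and A_0(t,x) = -(2/((m-1)σ_{m+1})) (t²+|x|²)^{-(m-1)/2}. (This is the componentwise form of the relation D̄(ē₀ B_1) = C_0: B_1 is the conjugate harmonic potential of A_1 in upper half-space.) -/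
open MeasureTheory

/-- The components `B_{1,j}(t,x) = (2/σ_{m+1}) (t x_j/|x|^m) F_m(|x|/t)
  - (2/((m-1)σ_{m+1})) x_j (t²+|x|²)^{-(m-1)/2}` of the conjugate harmonic potential `B_1`. -/
noncomputable def potB1 (m : ℕ) (j : Fin m) (t : ℝ) (x : EuclideanSpace ℝ (Fin m)) : ℝ :=
  2 / sphereArea (m + 1) * (t * x j / ‖x‖ ^ m) * Fpot m (‖x‖ / t) -
    2 / (((m : ℝ) - 1) * sphereArea (m + 1)) * x j * (t ^ 2 + ‖x‖ ^ 2) ^ (-(((m : ℝ) - 1) / 2))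

open Real in
lemma sphereArea_pos (n : ℕ) (hn : 0 < n) : 0 < sphereArea n := by
  unfold sphereArea
  have h1 : (0:ℝ) < (n:ℝ)/2 := by positivity
  have := Real.Gamma_pos_of_pos h1
  positivity

lemma hasDerivAt_Fpot (m : ℕ) (v : ℝ) :
    HasDerivAt (Fpot m) (v ^ (m - 1) / (1 + v ^ 2) ^ (((m : ℝ) + 1) / 2)) v := by
  have hcont : Continuous fun η : ℝ => η ^ (m-1) / (1 + η ^ 2) ^ (((m : ℝ) + 1) / 2) := by
    apply Continuous.div (by continuity)
    · exact Continuous.rpow_const (by continuity) (fun η => Or.inl (by positivity))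
    · intro η; positivity
  unfold Fpot
  exact (intervalIntegral.integral_hasStrictDerivAt_right
    (hcont.intervalIntegrable _ _) hcont.stronglyMeasurable.stronglyMeasurableAtFilter
    hcont.continuousAt).hasDerivAt

lemma keyF (k : ℕ) {t r : ℝ} (ht : 0 < t) (hr : 0 < r) :
    (r/t)^(k+1) / (1+(r/t)^2) ^ (((k:ℝ)+3)/2)
      = r^(k+1) * t^2 / (t^2+r^2) ^ (((k:ℝ)+3)/2) := by
  have h1 : 1+(r/t)^2 = (t^2+r^2)/t^2 := by field_simp
  have h2 : ((t:ℝ)^2) ^ (((k:ℝ)+3)/2) = t^(k+3) := by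
    rw [← Real.rpow_natCast t 2, ← Real.rpow_mul ht.le, ← Real.rpow_natCast t (k+3)]
    push_cast; ring_nf
  rw [h1, Real.div_rpow (by positivity) (by positivity), h2, div_pow]
  have hX : (0:ℝ) < (t^2+r^2) ^ (((k:ℝ)+3)/2) := by positivity
  field_simp
  ring

lemma keyY (k : ℕ) {t r : ℝ} (ht : 0 < t) (hr : 0 < r) :
    (t^2+r^2) ^ (-(((k:ℝ)+1)/2)) = (t^2+r^2) / (t^2+r^2) ^ (((k:ℝ)+3)/2) := by
  rw [eq_div_iff (by positivity), ← Real.rpow_add (by positivity)]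
  have : -(((k:ℝ)+1)/2) + ((k:ℝ)+3)/2 = 1 := by ring
  rw [this, Real.rpow_one]

lemma keyX (k : ℕ) {t r : ℝ} (ht : 0 < t) (hr : 0 < r) :
    (t^2+r^2) ^ (-(((k:ℝ)+1)/2) - 1) = ((t^2+r^2) ^ (((k:ℝ)+3)/2))⁻¹ := by
  rw [← Real.rpow_neg (by positivity)]
  ring_nf


lemma time_deriv (k : ℕ) (t : ℝ) (ht : 0 < t)
    (x : EuclideanSpace ℝ (Fin (k+2))) (hx : x ≠ 0) (j : Fin (k+2)) :
    HasDerivAt (fun s => potB1 (k+2) j s x) (potB0 (k+2) j t x) t := by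
  have hr : 0 < ‖x‖ := norm_pos_iff.mpr hx
  set r := ‖x‖ with hrdef
  have hσ : 0 < sphereArea (k+2+1) := sphereArea_pos _ (by omega)
  set σ := sphereArea (k+2+1) with hσdef
  have hinv : HasDerivAt (fun s : ℝ => r / s) (r * -(t^2)⁻¹) t := by
    simp only [div_eq_mul_inv]
    exact (hasDerivAt_inv ht.ne').const_mul r
  have hF := (hasDerivAt_Fpot (k+2) (r/t)).comp t hinv
  simp only [Function.comp_def] at hF
  have h1 := ((((hasDerivAt_id t).mul_const (x j)).div_const (r^(k+2))).const_mul (2/σ)).mul hF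
  have hsq := (hasDerivAt_pow 2 t).add_const (r^2)
  have hpos : ((fun s : ℝ => s^2 + r^2) t) ≠ 0 := by simp only; positivity
  have h2 := (hsq.rpow_const (p := -(((((k+2:ℕ)):ℝ)-1)/2)) (Or.inl hpos)).const_mul
      (2/(((((k+2:ℕ)):ℝ)-1)*σ) * x j)
  have h := h1.sub h2
  refine h.congr_deriv (Eq.symm ?_)
  simp only [potB0, id_eq, show k+2-1 = k+1 from rfl]
  push_cast
  have e1 : ((k:ℝ)+2+1)/2 = ((k:ℝ)+3)/2 := by ring
  have e2 : -(((k:ℝ)+2-1)/2) = -(((k:ℝ)+1)/2) := by ring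
  rw [e1, e2, keyF k ht hr, keyX k ht hr, ← hrdef, ← hσdef]
  have hX : (0:ℝ) < (t^2+r^2) ^ (((k:ℝ)+3)/2) := by positivity
  have hk : (0:ℝ) < (k:ℝ)+2-1 := by have := Nat.cast_nonneg (α:=ℝ) k; linarith
  field_simp
  ring

lemma space_deriv (k : ℕ) (t : ℝ) (ht : 0 < t)
    (x : EuclideanSpace ℝ (Fin (k+2))) (hx : x ≠ 0) (i j : Fin (k+2)) :
    HasDerivAt (fun s : ℝ => potB1 (k+2) j t (x + s • EuclideanSpace.single i (1:ℝ)))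
      (2 / sphereArea (k+2+1) *
         (t * ((if i = j then (1:ℝ) else 0) * ‖x‖^2 - ((k:ℝ)+2) * x i * x j) / ‖x‖^(k+4)
            * Fpot (k+2) (‖x‖/t)
          + t^2 * x i * x j / (‖x‖^2 * (t^2+‖x‖^2) ^ (((k:ℝ)+3)/2)))
       - 2 / (((k:ℝ)+1) * sphereArea (k+2+1)) *
         ((if i = j then (1:ℝ) else 0) * ((t^2+‖x‖^2) / (t^2+‖x‖^2) ^ (((k:ℝ)+3)/2))
           - ((k:ℝ)+1) * x i * x j / (t^2+‖x‖^2) ^ (((k:ℝ)+3)/2)))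
      0 := by
  have hr : 0 < ‖x‖ := norm_pos_iff.mpr hx
  set r := ‖x‖ with hrdef
  have hσ : 0 < sphereArea (k+2+1) := sphereArea_pos _ (by omega)
  set σ := sphereArea (k+2+1) with hσdef
  set δ := (if i = j then (1:ℝ) else 0) with hδdef
  have hnorm : ∀ s : ℝ, ‖x + s • EuclideanSpace.single i (1:ℝ)‖
      = Real.sqrt (r^2 + 2*x i*s + s^2) := by
    intro s
    rw [← Real.sqrt_sq (norm_nonneg _)]
    congr 1
    rw [norm_add_sq_real]
    simp [EuclideanSpace.inner_single_right, norm_smul, real_inner_smul_right]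
    ring
  have happly : ∀ s : ℝ, (x + s • EuclideanSpace.single i (1:ℝ)) j = x j + s * δ := by
    intro s
    simp only [PiLp.add_apply, PiLp.smul_apply, EuclideanSpace.single_apply, smul_eq_mul,
      hδdef]
    rcases eq_or_ne i j with h | h
    · simp [h]
    · simp [h, Ne.symm h]
  have hfun : (fun s : ℝ => potB1 (k+2) j t (x + s • EuclideanSpace.single i (1:ℝ)))
      = fun s : ℝ =>
        2/σ * (t * (x j + s * δ) / (Real.sqrt (r^2 + 2*x i*s + s^2))^(k+2))
            * Fpot (k+2) (Real.sqrt (r^2 + 2*x i*s + s^2) / t)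
          - 2/(((((k+2:ℕ)):ℝ)-1) * σ) * (x j + s * δ)
            * (t^2 + (Real.sqrt (r^2 + 2*x i*s + s^2))^2) ^ (-(((((k+2:ℕ)):ℝ)-1)/2)) := by
    funext s
    simp only [potB1, hnorm s, happly s, hσdef]
  rw [hfun]
  have hQ : HasDerivAt (fun s : ℝ => r^2 + 2*x i*s + s^2) (2*x i) 0 := by
    refine ((((hasDerivAt_id (0:ℝ)).const_mul (2*x i)).const_add (r^2)).add
      (hasDerivAt_pow 2 (0:ℝ))).congr_deriv ?_
    simp
  have hQ0 : Real.sqrt (r^2 + 2*x i*0 + 0^2) = r := by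
    rw [show r^2 + 2*x i*0 + 0^2 = r^2 by ring, Real.sqrt_sq hr.le]
  have hsq : HasDerivAt (fun s : ℝ => Real.sqrt (r^2 + 2*x i*s + s^2)) (x i / r) 0 := by
    have h1 : HasDerivAt Real.sqrt
        (1/(2*Real.sqrt ((fun s : ℝ => r^2 + 2*x i*s + s^2) 0)))
        ((fun s : ℝ => r^2 + 2*x i*s + s^2) 0) :=
      Real.hasDerivAt_sqrt (by show r^2 + 2*x i*0 + 0^2 ≠ 0; norm_num; positivity)
    have h2 := h1.comp 0 hQ
    simp only [Function.comp_def] at h2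
    refine h2.congr_deriv (Eq.symm ?_)
    simp only
    rw [show r^2 + 2*x i*0 + 0^2 = r^2 by ring, Real.sqrt_sq hr.le]
    field_simp
  have ha : HasDerivAt (fun s : ℝ => x j + s * δ) δ 0 := by
    simpa using ((hasDerivAt_id (0:ℝ)).mul_const δ).const_add (x j)
  have hden : ((fun s : ℝ => (Real.sqrt (r^2 + 2*x i*s + s^2))^(k+2)) 0) ≠ 0 := by
    show (Real.sqrt (r^2 + 2*x i*0 + 0^2))^(k+2) ≠ 0
    rw [hQ0]
    positivity
  have hFc := HasDerivAt.comp 0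
    (hasDerivAt_Fpot (k+2) ((fun s : ℝ => Real.sqrt (r^2 + 2*x i*s + s^2) / t) 0))
    (hsq.div_const t)
  simp only [Function.comp_def] at hFc
  have h1 := (((ha.const_mul t).div (hsq.pow (k+2)) hden).const_mul (2/σ)).mul hFc
  have hZpos : ((fun s : ℝ => t^2 + (Real.sqrt (r^2 + 2*x i*s + s^2))^2) 0) ≠ 0 := by
    show (t^2 + (Real.sqrt (r^2 + 2*x i*0 + 0^2))^2) ≠ 0
    positivity
  have hZ := ((hsq.pow 2).const_add (t^2)).rpow_const
    (p := -(((((k+2:ℕ)):ℝ)-1)/2)) (Or.inl hZpos)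
  have h2 := (ha.const_mul (2/(((((k+2:ℕ)):ℝ)-1)*σ))).mul hZ
  have h := h1.sub h2
  refine h.congr_deriv (Eq.symm ?_)
  simp only [Pi.pow_apply, Pi.div_apply]
  rw [hQ0]
  simp only [show k+2-1 = k+1 from rfl]
  push_cast
  have e1 : ((k:ℝ)+2+1)/2 = ((k:ℝ)+3)/2 := by ring
  have e2 : -(((k:ℝ)+2-1)/2) = -(((k:ℝ)+1)/2) := by ring
  rw [e1, e2, keyF k ht hr, keyY k ht hr, keyX k ht hr]
  have hX : (0:ℝ) < (t^2+r^2) ^ (((k:ℝ)+3)/2) := by positivity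
  have hk : (0:ℝ) < (k:ℝ)+2-1 := by have := Nat.cast_nonneg (α:=ℝ) k; linarith
  field_simp
  ring

theorem B1_conjugate_harmonic_potential
    (m : ℕ) (hm : 2 ≤ m) (t : ℝ) (ht : 0 < t) (x : EuclideanSpace ℝ (Fin m)) (hx : x ≠ 0) :
    (∀ j : Fin m, deriv (fun s => potB1 m j s x) t = potB0 m j t x) ∧
    (∑ j : Fin m,
        deriv (fun s : ℝ => potB1 m j t (x + s • EuclideanSpace.single j (1 : ℝ))) 0 =
      potA0 m t x) ∧
    (∀ i j : Fin m,
      deriv (fun s : ℝ => potB1 m j t (x + s • EuclideanSpace.single i (1 : ℝ))) 0 =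
        deriv (fun s : ℝ => potB1 m i t (x + s • EuclideanSpace.single j (1 : ℝ))) 0) := by
  obtain ⟨k, rfl⟩ : ∃ k, m = k + 2 := ⟨m - 2, by omega⟩
  have hr : 0 < ‖x‖ := norm_pos_iff.mpr hx
  have hσ : 0 < sphereArea (k+2+1) := sphereArea_pos _ (by omega)
  refine ⟨fun j => (time_deriv k t ht x hx j).deriv, ?_, fun i j => ?_⟩
  · -- divergence identity
    set r := ‖x‖ with hrdef
    set σ := sphereArea (k+2+1) with hσdef
    set X := (t^2+r^2) ^ (((k:ℝ)+3)/2) with hXdef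
    set F := Fpot (k+2) (r/t) with hFdef
    have hX : (0:ℝ) < X := by rw [hXdef]; positivity
    set A := 2/σ * (t * r^2 / r^(k+4) * F) - 2/(((k:ℝ)+1)*σ) * ((t^2+r^2)/X) with hAdef
    set B := 2/σ * (-(((k:ℝ)+2) * t) / r^(k+4) * F + t^2/(r^2*X))
        + 2/(((k:ℝ)+1)*σ) * (((k:ℝ)+1)/X) with hBdef
    have hsum : ∑ j : Fin (k+2), (x j)^2 = r^2 := by
      rw [hrdef, EuclideanSpace.norm_eq, Real.sq_sqrt (by positivity)]
      simp [sq_abs]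
    have hder : ∀ j : Fin (k+2),
        deriv (fun s : ℝ => potB1 (k+2) j t (x + s • EuclideanSpace.single j (1:ℝ))) 0
          = A + B * (x j)^2 := by
      intro j
      rw [(space_deriv k t ht x hx j j).deriv, if_pos rfl, hAdef, hBdef]
      ring
    rw [Finset.sum_congr rfl (fun j _ => hder j), Finset.sum_add_distrib,
      Finset.sum_const, ← Finset.mul_sum, hsum]
    simp only [Finset.card_univ, Fintype.card_fin, nsmul_eq_mul, potA0]
    rw [hAdef, hBdef]
    push_cast
    have e2 : -(((k:ℝ)+2-1)/2) = -(((k:ℝ)+1)/2) := by ring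
    rw [e2, keyY k ht hr]
    have hk : (0:ℝ) < (k:ℝ)+1 := by have := Nat.cast_nonneg (α:=ℝ) k; linarith
    rw [← hσdef, ← hXdef, show ((k:ℝ)+2-1) = ((k:ℝ)+1) by ring]
    field_simp
    ring
  · -- symmetry of mixed derivatives
    rw [(space_deriv k t ht x hx i j).deriv, (space_deriv k t ht x hx j i).deriv]
    rcases eq_or_ne i j with h | h
    · subst h; ring
    · simp only [if_neg h, if_neg (Ne.symm h)]
      ring
end
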